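/- If D is a symmetric positive definite n×n real matrix, a is a nonzero vector in ℝⁿ, and A ≥ 0, then the elasto-plastic matrix D_ep = D - (D a aᵀ D)/(A + aᵀ D a) is symmetric and positive semidefinite. -/

import Mathlib

/-!
Writing `⟪x, y⟫ = xᵀ D y` for the semi-inner product of `D`, the quadratic form of `D_ep` is
`⟪x, x⟫ - ⟪a, x⟫² / (A + ⟪a, a⟫)`, which is nonnegative by Cauchy–Schwarz
`⟪a, x⟫² ≤ ⟪a, a⟫ ⟪x, x⟫`. Symmetry comes for free, since positive semidefinite real matrices
are symmetric.
-/

open Matrix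

variable {ι : Type*} [Fintype ι]

theorem Matrix.PosSemidef.dotProduct_mulVec_sq_le {M : Matrix ι ι ℝ} (hM : M.PosSemidef)
    (x y : ι → ℝ) : (x ⬝ᵥ M *ᵥ y) ^ 2 ≤ (x ⬝ᵥ M *ᵥ x) * (y ⬝ᵥ M *ᵥ y) := by
  let := M.toSeminormedAddCommGroup hM
  let := M.toInnerProductSpace hM
  have inner_eq : ∀ u v : ι → ℝ, inner ℝ u v = u ⬝ᵥ M *ᵥ v := fun u v => by
    change (M *ᵥ v) ⬝ᵥ star u = _
    rw [star_trivial, dotProduct_comm]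
  simpa only [← inner_eq, sq] using real_inner_mul_inner_self_le x y

theorem Matrix.IsSymm.dotProduct_mul_vecMulVec_mul_mulVec {M : Matrix ι ι ℝ} (hM : M.IsSymm)
    (a x : ι → ℝ) : x ⬝ᵥ (M * vecMulVec a a * M) *ᵥ x = (a ⬝ᵥ M *ᵥ x) ^ 2 := by
  have hxa : x ⬝ᵥ M *ᵥ a = a ⬝ᵥ M *ᵥ x := by
    rw [dotProduct_mulVec, ← hM.eq, vecMul_transpose, dotProduct_comm, hM.eq]
  rw [mul_vecMulVec, ← mulVec_mulVec, vecMulVec_mulVec, dotProduct_smul, hxa]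
  simp [sq]

/-- For `c = 0` the hypothesis forces `aᵀ M a = 0`, and `c⁻¹ = 0` leaves `M` itself. -/
theorem Matrix.PosSemidef.sub_inv_smul_mul_vecMulVec_mul {M : Matrix ι ι ℝ} (hM : M.PosSemidef)
    {a : ι → ℝ} {c : ℝ} (hc : a ⬝ᵥ M *ᵥ a ≤ c) :
    (M - c⁻¹ • (M * vecMulVec a a * M)).PosSemidef := by
  have hMs : M.IsSymm := isHermitian_iff_isSymm.mp hM.isHermitian
  have hc₀ : 0 ≤ c := (hM.dotProduct_mulVec_nonneg a).trans hc
  have hP : (M * vecMulVec a a * M).PosSemidef := by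
    simpa [hMs.eq] using (posSemidef_vecMulVec_self_star a).conjTranspose_mul_mul_same M
  refine .of_dotProduct_mulVec_nonneg (hM.isHermitian.sub (hP.smul (inv_nonneg.2 hc₀)).isHermitian)
    fun x => ?_
  have hx := hM.dotProduct_mulVec_nonneg x
  rw [star_trivial] at hx ⊢
  rw [sub_mulVec, dotProduct_sub, smul_mulVec, dotProduct_smul, smul_eq_mul,
    hMs.dotProduct_mul_vecMulVec_mul_mulVec, sub_nonneg]
  exact inv_mul_le_of_le_mul₀ hc₀ hx <|
    (hM.dotProduct_mulVec_sq_le a x).trans (mul_le_mul_of_nonneg_right hc hx)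

theorem elastoplastic_matrix_symm_posSemidef_general
    {n : ℕ} (D : Matrix (Fin n) (Fin n) ℝ) (hD : D.PosDef)
    (a : Fin n → ℝ) (A : ℝ) (hA : 0 ≤ A) :
    let Dep := D - (A + a ⬝ᵥ D *ᵥ a)⁻¹ • (D * vecMulVec a a * D)
    Dep.IsSymm ∧ Dep.PosSemidef := by
  intro Dep
  have hDep : Dep.PosSemidef :=
    hD.posSemidef.sub_inv_smul_mul_vecMulVec_mul (le_add_of_nonneg_left hA)
  exact ⟨isHermitian_iff_isSymm.mp hDep.isHermitian, hDep⟩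

theorem elastoplastic_matrix_symm_posSemidef
    {n : ℕ} (D : Matrix (Fin n) (Fin n) ℝ) (hD : D.PosDef)
    (a : Fin n → ℝ) (ha : a ≠ 0) (A : ℝ) (hA : 0 ≤ A) :
    let Dep := D - (A + a ⬝ᵥ D *ᵥ a)⁻¹ • (D * vecMulVec a a * D)
    Dep.IsSymm ∧ Dep.PosSemidef :=
  elastoplastic_matrix_symm_posSemidef_general D hD a A hA
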